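/- If a graph isomorphism \varphi of a directed graph G onto itself reverses all arrows (i.e., (x,y) \in E iff (\varphi(y),\varphi(x)) \in E), then the induced map on subgraphs of the bunkbed graph (applying \varphi to both bunks and reversing horizontal edges, fixing the bunk labels) is a bijection carrying the event \{x^\varepsilon \to y^\delta\} onto the event \{\varphi(y)^\delta \to \varphi(x)^\varepsilon\}, and it preserves the uniform percolation measure and the conditioning event that a set T of posts is present whenever \varphi(T)=T. -/
import Mathlib


/-- Edges of the bunkbed graph of a directed graph on vertex type `V`:
`horiz u v ε` is the copy of the directed edge `(u,v)` in bunk `ε`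
(`false` = lower bunk `-`, `true` = upper bunk `+`); `vert w` is the
bidirected vertical edge `(w⁻, w⁺)`. -/
inductive BBEdge (V : Type) : Type
  | horiz : V → V → Bool → BBEdge V
  | vert  : V → BBEdge V
deriving DecidableEq

/-- The `F`-mirroring map on single edges: vertical edges are fixed, a horizontal
edge whose shadow lies in `F` is sent to its mirrored copy in the other bunk, and
horizontal edges with shadow outside `F` are fixed. -/
def mir {V : Type} [DecidableEq V] (F : Finset (V × V)) : BBEdge V → BBEdge V
  | .horiz u v ε => if (u, v) ∈ F then .horiz u v (!ε) else .horiz u v ε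
  | .vert w => .vert w

/-- The `F`-mirrored subgraph `M(H,F)`. -/
def M {V : Type} [DecidableEq V] (H : Finset (BBEdge V)) (F : Finset (V × V)) :
    Finset (BBEdge V) :=
  H.image (mir F)
/-- The edge set of the bunkbed graph of the directed graph with vertex set `Vs`
and edge set `E`: the vertical edges at all vertices together with the two
horizontal copies of each edge. -/
def bbEdges {V : Type} [DecidableEq V] (Vs : Finset V) (E : Finset (V × V)) :
    Finset (BBEdge V) :=
  Vs.image BBEdge.vert ∪ E.image (fun p => BBEdge.horiz p.1 p.2 false) ∪
    E.image (fun p => BBEdge.horiz p.1 p.2 true)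
/-- Probability of the event `A` under uniform (`p = 1/2`) Bernoulli bond
percolation on the edge set `s`: a subgraph is a uniformly random subset of `s`. -/
noncomputable def Pr {V : Type} [DecidableEq V] (s : Finset (BBEdge V))
    (A : Finset (BBEdge V) → Prop) : ℚ :=
  letI := Classical.decPred A
  ((s.powerset.filter A).card : ℚ) / (s.powerset.card : ℚ)

/-- One step of directed traversal in a subgraph `H` of the bunkbed graph:
horizontal edges are used in their direction within a bunk, and vertical edges
may be traversed in both directions. Vertices of the bunkbed graph are pairs
`(w, ε)` with `ε : Bool` the bunk label (`false` = `-`, `true` = `+`). -/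
def bbStep {V : Type} [DecidableEq V] (H : Finset (BBEdge V)) :
    V × Bool → V × Bool → Prop := fun a b =>
  (a.1 = b.1 ∧ a.2 ≠ b.2 ∧ BBEdge.vert a.1 ∈ H) ∨
    (a.2 = b.2 ∧ BBEdge.horiz a.1 b.1 a.2 ∈ H)

/-- Directed reachability `x → y` in a subgraph of the bunkbed graph. -/
def bbReach {V : Type} [DecidableEq V] (H : Finset (BBEdge V))
    (a b : V × Bool) : Prop :=
  Relation.ReflTransGen (bbStep H) a b
/-- The conditioning event of the conditioned bunkbed model `𝓔_T`: all vertices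
of `T` are posts. -/
def postCond {V : Type} [DecidableEq V] (T : Finset V)
    (H : Finset (BBEdge V)) : Prop :=
  ∀ t ∈ T, BBEdge.vert t ∈ H

/-- The map induced on subgraphs of the bunkbed graph by an arrow-reversing
automorphism `φ`: each horizontal edge `(x^ε, y^ε)` is replaced by
`(φ(y)^ε, φ(x)^ε)` (bunk labels fixed) and each vertical edge at `w` by the
vertical edge at `φ(w)`. -/
def Phi {V : Type} [DecidableEq V] (φ : V → V) (H : Finset (BBEdge V)) :
    Finset (BBEdge V) :=
  H.image fun e => match e with
    | .horiz x y ε => .horiz (φ y) (φ x) ε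
    | .vert w => .vert (φ w)


section AuxARA
variable {V : Type} [DecidableEq V]

/-- The edge-level map used by `Phi`. -/
def eMapARA (φ : V → V) : BBEdge V → BBEdge V
  | .horiz x y ε => .horiz (φ y) (φ x) ε
  | .vert w => .vert (φ w)

lemma Phi_eq_image (φ : V → V) (H : Finset (BBEdge V)) :
    Phi φ H = H.image (eMapARA φ) := by
  unfold Phi
  apply Finset.image_congr
  intro e _
  cases e <;> rfl

lemma eMapARA_comp (φ ψ : V → V) (h : ∀ w, ψ (φ w) = w) (e : BBEdge V) :
    eMapARA ψ (eMapARA φ e) = e := by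
  cases e <;> simp [eMapARA, h]

lemma Phi_Phi (φ ψ : V → V) (h : ∀ w, ψ (φ w) = w) (H : Finset (BBEdge V)) :
    Phi ψ (Phi φ H) = H := by
  rw [Phi_eq_image, Phi_eq_image, Finset.image_image]
  have : (eMapARA ψ ∘ eMapARA φ) = id := by
    funext e; exact eMapARA_comp φ ψ h e
  rw [this, Finset.image_id]

lemma mem_bbEdges_vert (Vs : Finset V) (E : Finset (V × V)) (w : V) :
    BBEdge.vert w ∈ bbEdges Vs E ↔ w ∈ Vs := by
  simp [bbEdges]

lemma mem_bbEdges_horiz (Vs : Finset V) (E : Finset (V × V)) (u v : V) (ε : Bool) :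
    BBEdge.horiz u v ε ∈ bbEdges Vs E ↔ (u, v) ∈ E := by
  cases ε <;> simp [bbEdges] <;>
    exact ⟨fun ⟨a, b, h, h1, h2⟩ => by rwa [← h1, ← h2], fun h => ⟨u, v, h, rfl, rfl⟩⟩

lemma eMapARA_mem_bbEdges (Vs : Finset V) (E : Finset (V × V)) (φ : V → V)
    (hrev : ∀ x y : V, (x, y) ∈ E ↔ (φ y, φ x) ∈ E)
    (hVs : ∀ w ∈ Vs, φ w ∈ Vs)
    {e : BBEdge V} (he : e ∈ bbEdges Vs E) : eMapARA φ e ∈ bbEdges Vs E := by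
  cases e with
  | horiz u v ε =>
    rw [mem_bbEdges_horiz] at he
    simpa [eMapARA, mem_bbEdges_horiz] using (hrev u v).mp he
  | vert w =>
    rw [mem_bbEdges_vert] at he
    simpa [eMapARA, mem_bbEdges_vert] using hVs w he

lemma step_map (φ : V → V) (H : Finset (BBEdge V)) {a b : V × Bool}
    (h : bbStep H a b) : bbStep (Phi φ H) (φ b.1, b.2) (φ a.1, a.2) := by
  rw [Phi_eq_image]
  rcases h with ⟨h1, h2, h3⟩ | ⟨h1, h3⟩
  · refine Or.inl ⟨by simp [h1], by simpa using fun e => h2 e.symm, ?_⟩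
    have := Finset.mem_image_of_mem (eMapARA φ) h3
    simpa [eMapARA, h1] using this
  · refine Or.inr ⟨by simp [h1], ?_⟩
    have := Finset.mem_image_of_mem (eMapARA φ) h3
    simpa [eMapARA, h1] using this

lemma reach_map (φ : V → V) (H : Finset (BBEdge V)) {a b : V × Bool}
    (h : bbReach H a b) : bbReach (Phi φ H) (φ b.1, b.2) (φ a.1, a.2) := by
  induction h with
  | refl => exact Relation.ReflTransGen.refl
  | tail _ hstep ih => exact Relation.ReflTransGen.head (step_map φ H hstep) ih

end AuxARA

/-- if `φ` is an arrow-reversing automorphism of a finite directed graph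
`G` (a bijection with `(x,y) ∈ E ↔ (φ(y),φ(x)) ∈ E`), then the induced map `Φ` on
subgraphs of the bunkbed graph is a bijection which carries the event `{x^ε → y^δ}`
onto the event `{φ(y)^δ → φ(x)^ε}`, preserves the uniform percolation measure, and
preserves the conditioning event that all of `T` are posts whenever `φ(T) = T`. -/
theorem arrow_reversing_automorphism_symmetry {V : Type} [DecidableEq V]
    (Vs : Finset V) (E : Finset (V × V)) (φ : V → V)
    (hbij : Function.Bijective φ)
    (hrev : ∀ x y : V, (x, y) ∈ E ↔ (φ y, φ x) ∈ E)
    (hVs : Vs.image φ = Vs)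
    (T : Finset V) (hT : T.image φ = T) :
    Function.Bijective (Phi (V := V) φ) ∧
    (∀ (H : Finset (BBEdge V)) (x y : V) (ε δ : Bool),
      bbReach H (x, ε) (y, δ) ↔ bbReach (Phi φ H) (φ y, δ) (φ x, ε)) ∧
    (∀ A : Finset (BBEdge V) → Prop,
      Pr (bbEdges Vs E) A = Pr (bbEdges Vs E) (fun H => ∃ H₀, A H₀ ∧ H = Phi φ H₀)) ∧
    (∀ H : Finset (BBEdge V), postCond T H ↔ postCond T (Phi φ H)) := by
  obtain ⟨ψ, hψ1, hψ2⟩ := Function.bijective_iff_has_inverse.mp hbij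
  have hrev' : ∀ x y : V, (x, y) ∈ E ↔ (ψ y, ψ x) ∈ E := by
    intro x y
    constructor
    · intro h
      have := (hrev (ψ y) (ψ x)).mpr (by rwa [hψ2, hψ2])
      exact this
    · intro h
      have := (hrev (ψ y) (ψ x)).mp h
      rwa [hψ2, hψ2] at this
  have hVsφ : ∀ w ∈ Vs, φ w ∈ Vs := fun w hw => by
    rw [← hVs]; exact Finset.mem_image_of_mem φ hw
  have hVsψ : ∀ w ∈ Vs, ψ w ∈ Vs := fun w hw => by
    rw [← hVs] at hw
    obtain ⟨v, hv, rfl⟩ := Finset.mem_image.mp hw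
    rwa [hψ1]
  have hinv1 : ∀ H, Phi (V := V) ψ (Phi φ H) = H := Phi_Phi φ ψ hψ1
  have hinv2 : ∀ H, Phi (V := V) φ (Phi ψ H) = H := Phi_Phi ψ φ hψ2
  refine ⟨Function.bijective_iff_has_inverse.mpr ⟨Phi ψ, hinv1, hinv2⟩, ?_, ?_, ?_⟩
  · intro H x y ε δ
    constructor
    · intro h; exact reach_map φ H h
    · intro h
      have := reach_map ψ (Phi φ H) h
      rwa [hinv1, hψ1, hψ1] at this
  · intro A
    classical
    unfold Pr
    congr 1
    have : ((bbEdges Vs E).powerset.filter A).card =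
        ((bbEdges Vs E).powerset.filter (fun H => ∃ H₀, A H₀ ∧ H = Phi φ H₀)).card := by
      apply Finset.card_bij' (fun H _ => Phi φ H) (fun H _ => Phi ψ H)
      · intro H hH
        rw [Finset.mem_filter, Finset.mem_powerset] at hH ⊢
        refine ⟨?_, H, hH.2, rfl⟩
        rw [Phi_eq_image]
        intro e he
        obtain ⟨e₀, he₀, rfl⟩ := Finset.mem_image.mp he
        exact eMapARA_mem_bbEdges Vs E φ hrev hVsφ (hH.1 he₀)
      · intro H hH
        rw [Finset.mem_filter, Finset.mem_powerset] at hH ⊢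
        obtain ⟨hsub, H₀, hA, rfl⟩ := hH
        rw [hinv1]
        refine ⟨?_, hA⟩
        intro e he
        have : eMapARA φ e ∈ bbEdges Vs E := by
          apply hsub
          rw [Phi_eq_image]
          exact Finset.mem_image_of_mem _ he
        have := eMapARA_mem_bbEdges Vs E ψ hrev' hVsψ this
        rwa [eMapARA_comp φ ψ hψ1] at this
      · intro H _; exact hinv1 H
      · intro H _; exact hinv2 H
    simp only [this]
  · intro H
    have hTφ : ∀ t ∈ T, φ t ∈ T := fun t ht => by
      rw [← hT]; exact Finset.mem_image_of_mem φ ht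
    have hTψ : ∀ t ∈ T, ψ t ∈ T := fun t ht => by
      rw [← hT] at ht
      obtain ⟨s, hs, rfl⟩ := Finset.mem_image.mp ht
      rwa [hψ1]
    have key : ∀ t, BBEdge.vert t ∈ Phi φ H ↔ BBEdge.vert (ψ t) ∈ H := by
      intro t
      rw [Phi_eq_image, Finset.mem_image]
      constructor
      · rintro ⟨e, he, heq⟩
        cases e with
        | horiz u v ε => simp [eMapARA] at heq
        | vert w =>
          simp only [eMapARA, BBEdge.vert.injEq] at heq
          rwa [← heq, hψ1]
      · intro h
        exact ⟨BBEdge.vert (ψ t), h, by simp only [eMapARA, BBEdge.vert.injEq]; exact hψ2 t⟩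
    constructor
    · intro hp t ht
      rw [key]
      exact hp (ψ t) (hTψ t ht)
    · intro hp t ht
      have := hp (φ t) (hTφ t ht)
      rw [key, hψ1] at this
      exact this
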